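/- arXiv:math/0602206 — 6 statements merged into one kernel-verified Lean document; each statement's English description precedes it below -/
import Mathlib

section
/- In the extended twisted quantized enveloping algebra Ǔ'_q(sp_{2n}), for each odd i the relation q^{−δ_ik + δ_{i+1,k}} s_{i,i+1} s_{kl} = q^{δ_il − δ_{i+1,l}} s_{kl} s_{i,i+1} holds for all admissible k, l; consequently the elements s_{1,2}, s_{3,4}, …, s_{2n−1,2n} pairwise commute. -/
noncomputable section

/-- Generators `s_ij` (1 ≤ i,j ≤ 2n, 0-indexed here) and the inverses
`s_{2k-1,2k}⁻¹` (paper-odd rows, here `sInv k` for `k : Fin n`) of the twisted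
quantized enveloping algebra the extended twisted quantized enveloping algebra `Ǔ'_q(sp_{2n})`. -/
inductive SpGen (n : ℕ) where
  | s (i j : Fin (2 * n))
  | sInv (k : Fin n)

/-- The generator `s_ij` inside the free algebra. -/
def Sg (n : ℕ) (i j : Fin (2 * n)) : FreeAlgebra ℂ (SpGen n) := FreeAlgebra.ι ℂ (SpGen.s i j)

/-- The generator `s_{2k-1,2k}⁻¹` inside the free algebra. -/
def SIg (n : ℕ) (k : Fin n) : FreeAlgebra ℂ (SpGen n) := FreeAlgebra.ι ℂ (SpGen.sInv k)

/-- The 0-indexed version of the paper's odd index `2k−1`. -/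
def lo {n : ℕ} (k : Fin n) : Fin (2 * n) := ⟨2 * k.val, by have := k.isLt; omega⟩

/-- The 0-indexed version of the paper's even index `2k`. -/
def hi {n : ℕ} (k : Fin n) : Fin (2 * n) := ⟨2 * k.val + 1, by have := k.isLt; omega⟩

/-- `q^{δ_ab}`: equals `q` if `a = b` and `1` otherwise. -/
def qd (q : ℂ) {m : ℕ} (a b : Fin m) : ℂ := if a = b then q else 1

/-- `δ_{a<b}`: equals `1` if `a < b` and `0` otherwise. -/
def dlt {m : ℕ} (a b : Fin m) : ℂ := if a < b then 1 else 0

/-- `δ_{a<b<c}`: equals `1` if `a < b < c` and `0` otherwise. -/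
def dlt3 {m : ℕ} (a b c : Fin m) : ℂ := if a < b ∧ b < c then 1 else 0

/-- The defining relations of the twisted quantized enveloping algebra
the extended twisted quantized enveloping algebra `Ǔ'_q(sp_{2n})`: vanishing of `s_ij` above the block diagonal, invertibility
of the `s_{2k-1,2k}`, the component form of the reflection equation
`R S₁ R' S₂ = S₂ R' S₁ R`, and the relations
`s_{i+1,i+1} s_ii − q² s_{i+1,i} s_{i,i+1} = q³` for (paper-)odd `i`. -/
inductive SpRelExt (q : ℂ) (n : ℕ) :
    FreeAlgebra ℂ (SpGen n) → FreeAlgebra ℂ (SpGen n) → Prop where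
  | s_zero (i j : Fin (2 * n))
      (h : (j.val = i.val + 1 ∧ i.val % 2 = 1) ∨ i.val + 2 ≤ j.val) :
      SpRelExt q n (Sg n i j) 0
  | inv_right (k : Fin n) : SpRelExt q n (Sg n (lo k) (hi k) * SIg n k) 1
  | inv_left (k : Fin n) : SpRelExt q n (SIg n k * Sg n (lo k) (hi k)) 1
  | reflection (i j a b : Fin (2 * n)) :
      SpRelExt q n
        ((qd q a j * qd q i j) • (Sg n i a * Sg n j b)
          - (qd q a b * qd q i b) • (Sg n j b * Sg n i a))
        (((q - q⁻¹) * qd q a i * (dlt b a - dlt i j)) • (Sg n j a * Sg n i b)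
          + (q - q⁻¹) • ((qd q a b * dlt b i) • (Sg n j i * Sg n b a)
              - (qd q i j * dlt a j) • (Sg n i j * Sg n a b))
          + ((q - q⁻¹) ^ 2 * (dlt3 b a i - dlt3 a i j)) • (Sg n j i * Sg n a b))

/-- The twisted quantized enveloping algebra the extended twisted quantized enveloping algebra `Ǔ'_q(sp_{2n})`. -/
abbrev Usp (q : ℂ) (n : ℕ) := RingQuot (SpRelExt q n)

/-- The generator `s_ij` of the extended twisted quantized enveloping algebra `Ǔ'_q(sp_{2n})`. -/
def S (q : ℂ) (n : ℕ) (i j : Fin (2 * n)) : Usp q n :=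
  RingQuot.mkAlgHom ℂ (SpRelExt q n) (Sg n i j)

/-- The generator `s_{2k-1,2k}⁻¹` of the extended twisted quantized enveloping algebra `Ǔ'_q(sp_{2n})`. -/
def SInv (q : ℂ) (n : ℕ) (k : Fin n) : Usp q n :=
  RingQuot.mkAlgHom ℂ (SpRelExt q n) (SIg n k)



lemma S_zero' (q : ℂ) (n : ℕ) (i j : Fin (2 * n))
    (h : (j.val = i.val + 1 ∧ i.val % 2 = 1) ∨ i.val + 2 ≤ j.val) :
    S q n i j = 0 := by
  have h0 := RingQuot.mkAlgHom_rel ℂ (SpRelExt.s_zero (q := q) i j h)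
  simpa [S] using h0

lemma hrel' (q : ℂ) (n : ℕ) (i j a b : Fin (2 * n)) :
    (qd q a j * qd q i j) • (S q n i a * S q n j b)
      - (qd q a b * qd q i b) • (S q n j b * S q n i a)
    = ((q - q⁻¹) * qd q a i * (dlt b a - dlt i j)) • (S q n j a * S q n i b)
      + (q - q⁻¹) • ((qd q a b * dlt b i) • (S q n j i * S q n b a)
          - (qd q i j * dlt a j) • (S q n i j * S q n a b))
      + ((q - q⁻¹) ^ 2 * (dlt3 b a i - dlt3 a i j)) • (S q n j i * S q n a b) := by
  have h0 := RingQuot.mkAlgHom_rel ℂ (SpRelExt.reflection (q := q) (n := n) i j a b)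
  simpa [S, map_sub, map_add, map_mul, map_smul] using h0

lemma main_comm' (q : ℂ) (n : ℕ) (k : Fin n) (a b : Fin (2 * n)) :
    (qd q⁻¹ (lo k) a * qd q (hi k) a) • (S q n (lo k) (hi k) * S q n a b)
      = (qd q (lo k) b * qd q⁻¹ (hi k) b) • (S q n a b * S q n (lo k) (hi k)) := by
  have hv1 : (lo k).val = 2 * k.val := rfl
  have hv2 : (hi k).val = 2 * k.val + 1 := rfl
  have f_eo : ¬ lo k = hi k := by intro hc; have := congrArg Fin.val hc; omega
  have f_oe : ¬ hi k = lo k := by intro hc; have := congrArg Fin.val hc; omega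
  have f_eo_lt : lo k < hi k := by rw [Fin.lt_def]; omega
  have f_oe_nlt : ¬ hi k < lo k := by rw [Fin.lt_def]; omega
  have f_ee_nlt : ¬ lo k < lo k := lt_irrefl _
  have f_oo_nlt : ¬ hi k < hi k := lt_irrefl _
  rcases lt_trichotomy a.val (2 * k.val) with ha | ha | ha
  · -- a < e
    rcases lt_or_ge b.val (2 * k.val) with hb | hb
    · -- b < e : relation case
      have hz1 : S q n a (hi k) = 0 := S_zero' _ _ _ _ (by omega)
      have hz2 : S q n b (hi k) = 0 := S_zero' _ _ _ _ (by omega)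
      have f1 : ¬ hi k = a := by intro hc; have := congrArg Fin.val hc; omega
      have f2 : ¬ lo k = a := by intro hc; have := congrArg Fin.val hc; omega
      have f3 : ¬ hi k = b := by intro hc; have := congrArg Fin.val hc; omega
      have f4 : ¬ lo k = b := by intro hc; have := congrArg Fin.val hc; omega
      have g1 : b < hi k := by rw [Fin.lt_def]; omega
      have g2 : ¬ lo k < a := by rw [Fin.lt_def]; omega
      have g3 : b < lo k := by rw [Fin.lt_def]; omega
      have g4 : ¬ hi k < a := by rw [Fin.lt_def]; omega
      have h := hrel' q n (lo k) a (hi k) b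
      simp [qd, dlt, dlt3, f1, f2, f3, f4, g1, g2, g3, g4, f_oe, f_oe_nlt, hz1, hz2] at h ⊢
      linear_combination (norm := module) h
    · -- b ≥ e : S a b = 0
      have hz : S q n a b = 0 := S_zero' _ _ _ _ (by omega)
      simp [hz]
  · -- a = e
    have haf : a = lo k := by apply Fin.ext; omega
    subst haf
    rcases lt_trichotomy b.val (2 * k.val + 1) with hb | hb | hb
    · -- b < o
      rcases lt_or_ge b.val (2 * k.val) with hb' | hb'
      · -- b < e
        have hz2 : S q n b (hi k) = 0 := S_zero' _ _ _ _ (by omega)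
        have f3 : ¬ hi k = b := by intro hc; have := congrArg Fin.val hc; omega
        have f4 : ¬ lo k = b := by intro hc; have := congrArg Fin.val hc; omega
        have g1 : b < hi k := by rw [Fin.lt_def]; omega
        have g3 : b < lo k := by rw [Fin.lt_def]; omega
        have h := hrel' q n (lo k) (lo k) (hi k) b
        simp [qd, dlt, dlt3, f3, f4, g1, g3, f_oe, f_eo, f_oe_nlt, f_ee_nlt, hz2] at h ⊢
        linear_combination (norm := module) h
      · -- b = e
        have hbf : b = lo k := by apply Fin.ext; omega
        subst hbf
        have h := hrel' q n (lo k) (lo k) (hi k) (lo k)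
        simp [qd, dlt, dlt3, f_oe, f_eo, f_oe_nlt, f_ee_nlt, f_eo_lt] at h ⊢
        linear_combination (norm := module) h
    · -- b = o
      have hbf : b = hi k := by apply Fin.ext; omega
      subst hbf
      simp [qd, f_oe, f_eo]
    · -- b > o
      have hz : S q n (lo k) b = 0 := S_zero' _ _ _ _ (by omega)
      simp [hz]
  · -- a > e
    rcases lt_trichotomy a.val (2 * k.val + 1) with ha' | ha' | ha'
    · omega
    · -- a = o
      have haf : a = hi k := by apply Fin.ext; omega
      subst haf
      rcases lt_trichotomy b.val (2 * k.val + 1) with hb | hb | hb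
      · -- b < o
        rcases lt_or_ge b.val (2 * k.val) with hb' | hb'
        · -- b < e
          have hz2 : S q n b (hi k) = 0 := S_zero' _ _ _ _ (by omega)
          have f3 : ¬ hi k = b := by intro hc; have := congrArg Fin.val hc; omega
          have f4 : ¬ lo k = b := by intro hc; have := congrArg Fin.val hc; omega
          have g1 : b < hi k := by rw [Fin.lt_def]; omega
          have g3 : b < lo k := by rw [Fin.lt_def]; omega
          have h := hrel' q n (lo k) (hi k) (hi k) b
          simp [qd, dlt, dlt3, f3, f4, g1, g3, f_oe, f_eo, f_eo_lt, f_oo_nlt, f_oe_nlt, hz2] at h ⊢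
          linear_combination (norm := module) h
        · -- b = e
          have hbf : b = lo k := by apply Fin.ext; omega
          subst hbf
          have h := hrel' q n (lo k) (hi k) (hi k) (lo k)
          simp [qd, dlt, dlt3, f_oe, f_eo, f_eo_lt, f_oo_nlt, f_oe_nlt, f_ee_nlt] at h ⊢
          linear_combination (norm := module) h
      · -- b = o
        have hbf : b = hi k := by apply Fin.ext; omega
        subst hbf
        have h := hrel' q n (lo k) (hi k) (hi k) (hi k)
        simp [qd, dlt, dlt3, f_oe, f_eo, f_eo_lt, f_oo_nlt, f_oe_nlt] at h ⊢
        linear_combination (norm := module) h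
      · -- b > o
        have hz : S q n (hi k) b = 0 := S_zero' _ _ _ _ (by omega)
        simp [hz]
    · -- a > o
      have hz1 : S q n (lo k) a = 0 := S_zero' _ _ _ _ (by omega)
      have f1 : ¬ hi k = a := by intro hc; have := congrArg Fin.val hc; omega
      have f2 : ¬ lo k = a := by intro hc; have := congrArg Fin.val hc; omega
      have g2 : lo k < a := by rw [Fin.lt_def]; omega
      have g4 : hi k < a := by rw [Fin.lt_def]; omega
      rcases lt_trichotomy b.val (2 * k.val + 1) with hb | hb | hb
      · -- b < o
        rcases lt_or_ge b.val (2 * k.val) with hb' | hb'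
        · -- b < e
          have hz2 : S q n b (hi k) = 0 := S_zero' _ _ _ _ (by omega)
          have f3 : ¬ hi k = b := by intro hc; have := congrArg Fin.val hc; omega
          have f4 : ¬ lo k = b := by intro hc; have := congrArg Fin.val hc; omega
          have g1 : b < hi k := by rw [Fin.lt_def]; omega
          have g3 : b < lo k := by rw [Fin.lt_def]; omega
          have h := hrel' q n (lo k) a (hi k) b
          simp [qd, dlt, dlt3, f1, f2, f3, f4, g1, g2, g3, g4, f_oe, f_oe_nlt, hz1, hz2] at h ⊢
          linear_combination (norm := module) h
        · -- b = e
          have hbf : b = lo k := by apply Fin.ext; omega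
          subst hbf
          have h := hrel' q n (lo k) a (hi k) (lo k)
          simp [qd, dlt, dlt3, f1, f2, g2, g4, f_oe, f_eo, f_eo_lt, f_oe_nlt, f_ee_nlt, hz1] at h ⊢
          linear_combination (norm := module) h
      · -- b = o
        have hbf : b = hi k := by apply Fin.ext; omega
        subst hbf
        have h := hrel' q n (lo k) a (hi k) (hi k)
        simp [qd, dlt, dlt3, f1, f2, g2, g4, f_oe, f_eo, f_oo_nlt, f_oe_nlt, hz1] at h ⊢
        linear_combination (norm := module) h
      · -- b > o
        have hz3 : S q n (lo k) b = 0 := S_zero' _ _ _ _ (by omega)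
        have f3 : ¬ hi k = b := by intro hc; have := congrArg Fin.val hc; omega
        have f4 : ¬ lo k = b := by intro hc; have := congrArg Fin.val hc; omega
        have g1 : ¬ b < hi k := by rw [Fin.lt_def]; omega
        have g3 : ¬ b < lo k := by rw [Fin.lt_def]; omega
        have h := hrel' q n (lo k) a (hi k) b
        simp [qd, dlt, dlt3, f1, f2, f3, f4, g1, g2, g3, g4, f_oe, f_oe_nlt, hz1, hz3] at h ⊢
        linear_combination (norm := module) h


/-- In `Ǔ'_q(sp_{2n})`, for each paper-odd `i` (the row `lo k`) one has
`q^{−δ_ik + δ_{i+1,k}} s_{i,i+1} s_{kl} = q^{δ_il − δ_{i+1,l}} s_{kl} s_{i,i+1}`;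
consequently the elements `s_{1,2}, s_{3,4}, …, s_{2n−1,2n}` pairwise commute. -/
theorem s_odd_diag_commutation (q : ℂ) (hq : q ≠ 0) (hq2 : q ^ 2 ≠ 1) (n : ℕ) :
    (∀ (k : Fin n) (a b : Fin (2 * n)),
      (qd q⁻¹ (lo k) a * qd q (hi k) a) •
          (S q n (lo k) (hi k) * S q n a b)
        = (qd q (lo k) b * qd q⁻¹ (hi k) b) •
          (S q n a b * S q n (lo k) (hi k))) ∧
    ∀ k l : Fin n,
      S q n (lo k) (hi k) * S q n (lo l) (hi l)
        = S q n (lo l) (hi l) * S q n (lo k) (hi k) := by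
  refine ⟨fun k a b => main_comm' q n k a b, fun k l => ?_⟩
  by_cases hkl : k = l
  · subst hkl; rfl
  · have hkl' : k.val ≠ l.val := fun h => hkl (Fin.ext h)
    have hv1 : (lo k).val = 2 * k.val := rfl
    have hv2 : (hi k).val = 2 * k.val + 1 := rfl
    have hv3 : (lo l).val = 2 * l.val := rfl
    have hv4 : (hi l).val = 2 * l.val + 1 := rfl
    have f1 : ¬ lo k = lo l := by intro hc; have := congrArg Fin.val hc; omega
    have f2 : ¬ hi k = lo l := by intro hc; have := congrArg Fin.val hc; omega
    have f3 : ¬ lo k = hi l := by intro hc; have := congrArg Fin.val hc; omega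
    have f4 : ¬ hi k = hi l := by intro hc; have := congrArg Fin.val hc; omega
    have h := main_comm' q n k (lo l) (hi l)
    simpa [qd, f1, f2, f3, f4] using h

end
end

section
/- In Ǔ'_q(sp_{2n}), for any odd index i and any indices j ≤ i, b ≤ j, the element s_ii commutes with s_jb: s_ii s_jb = s_jb s_ii. -/
noncomputable section

/-! Take the reflection relation with `i = a = lo k`. Since the matrix `(s_cd)` is block lower
triangular, `s_{c, lo k} = 0` for `c < lo k`, and this kills every term of the right-hand side except,
when `j = lo k`, the term `(q - q⁻¹) q s_ii s_ib`. What remains is `s_ii s_jb − s_jb s_ii = 0`, or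
for `j = lo k` the relation `q² s_ii s_ib − s_ib s_ii = (q² − 1) s_ii s_ib`, which says the same. -/

namespace Usp

variable {q : ℂ} {n : ℕ}

theorem S_eq_zero {i j : Fin (2 * n)}
    (h : (j.val = i.val + 1 ∧ i.val % 2 = 1) ∨ i.val + 2 ≤ j.val) : S q n i j = 0 := by
  simpa [S] using RingQuot.mkAlgHom_rel ℂ (SpRelExt.s_zero (q := q) i j h)

theorem S_lo_eq_zero_of_lt {k : Fin n} {c : Fin (2 * n)} (hc : c < lo k) :
    S q n c (lo k) = 0 :=
  S_eq_zero <| by have : c.val < 2 * k.val := hc; simp only [lo]; omega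

theorem S_reflection (i j a b : Fin (2 * n)) :
    (qd q a j * qd q i j) • (S q n i a * S q n j b)
      - (qd q a b * qd q i b) • (S q n j b * S q n i a)
    = ((q - q⁻¹) * qd q a i * (dlt b a - dlt i j)) • (S q n j a * S q n i b)
      + (q - q⁻¹) • ((qd q a b * dlt b i) • (S q n j i * S q n b a)
          - (qd q i j * dlt a j) • (S q n i j * S q n a b))
      + ((q - q⁻¹) ^ 2 * (dlt3 b a i - dlt3 a i j)) • (S q n j i * S q n a b) := by
  simpa [S] using RingQuot.mkAlgHom_rel ℂ (SpRelExt.reflection (q := q) i j a b)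

theorem commute_S_lo_lo_of_lt {k : Fin n} {j : Fin (2 * n)} (hj : j < lo k) (b : Fin (2 * n)) :
    Commute (S q n (lo k) (lo k)) (S q n j b) := by
  have hz : S q n j (lo k) = 0 := S_lo_eq_zero_of_lt hj
  by_cases hb : b = lo k
  · rw [hb, hz]
    exact Commute.zero_right _
  have E := S_reflection (q := q) (lo k) j (lo k) b
  simp only [qd, dlt, dlt3, hz, hj.ne', Ne.symm hb, not_lt.mpr hj.le, ↓reduceIte, mul_one,
    one_smul, sub_zero, mul_ite, mul_zero, zero_mul, smul_zero, zero_smul, sub_self, add_zero,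
    lt_self_iff_false, and_false, and_self] at E
  exact sub_eq_zero.mp E

theorem commute_S_lo_lo_S_lo_of_lt (hq : q ≠ 0) {k : Fin n} {b : Fin (2 * n)} (hb : b < lo k) :
    Commute (S q n (lo k) (lo k)) (S q n (lo k) b) := by
  have E := S_reflection (q := q) (lo k) (lo k) (lo k) b
  simp only [qd, dlt, dlt3, S_lo_eq_zero_of_lt hb, hb, hb.ne', ↓reduceIte, mul_one, one_smul,
    lt_self_iff_false, sub_zero, mul_zero, smul_zero, zero_smul, sub_self, add_zero, and_false,
    and_self] at E
  have hc : (q - q⁻¹) * q = q * q - 1 := by field_simp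
  rw [hc] at E
  show _ = _
  linear_combination (norm := module) E

end Usp

theorem s_odd_diag_commutes_general (q : ℂ) (hq : q ≠ 0) (n : ℕ)
    (k : Fin n) (j b : Fin (2 * n)) (hj : j ≤ lo k) (hb : b ≤ j) :
    S q n (lo k) (lo k) * S q n j b = S q n j b * S q n (lo k) (lo k) := by
  rcases hj.lt_or_eq with hj | rfl
  · exact (Usp.commute_S_lo_lo_of_lt hj b).eq
  rcases hb.lt_or_eq with hb | rfl
  · exact (Usp.commute_S_lo_lo_S_lo_of_lt hq hb).eq
  · rfl

/-- In `Ǔ'_q(sp_{2n})`, for any paper-odd index `i = lo k` and any indices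
`j ≤ i`, `b ≤ j`, the element `s_ii` commutes with `s_jb`. -/
theorem s_odd_diag_commutes (q : ℂ) (hq : q ≠ 0) (hq2 : q ^ 2 ≠ 1) (n : ℕ)
    (k : Fin n) (j b : Fin (2 * n)) (hj : j ≤ lo k) (hb : b ≤ j) :
    S q n (lo k) (lo k) * S q n j b = S q n j b * S q n (lo k) (lo k) :=
  s_odd_diag_commutes_general q hq n k j b hj hb
end
end

section
/- Let q be a nonzero complex number that is not a root of unity, and let A be the algebra with generators s₁₁, s₂₂, s₁₂, s₁₂^{-1} and relations s₁₂ s₁₂^{-1} = s₁₂^{-1} s₁₂ = 1, s₁₁ s₂₂ = q^{-2} s₂₂ s₁₁ − (q−q^{-1})(s₁₂² − q²), s₁₂ s₁₁ = q² s₁₁ s₁₂, s₁₂ s₂₂ = q^{-2} s₂₂ s₁₂ (this is U'_q(sp₂)). In the Verma module M(λ) with highest vector ξ (satisfying s₁₁ ξ = 0, s₁₂ ξ = λ ξ, λ ∈ ℂ*, and with basis s₂₂^k ξ, k ≥ 0), one has s₁₁ s₂₂^k ξ = q³ (1 − λ² q^{−2k})(1 − q^{−2k}) s₂₂^{k−1}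 ξ for all k ≥ 1. -/
noncomputable section

/-- Generators `s₁₁, s₂₂, s₁₂, s₁₂⁻¹` of `U'_q(sp₂)`. -/
inductive Sp2Gen where
  | s11 | s22 | s12 | s12inv

/-- The defining relations of `U'_q(sp₂)`:
`s₁₂ s₁₂⁻¹ = s₁₂⁻¹ s₁₂ = 1`,
`s₁₁ s₂₂ = q⁻² s₂₂ s₁₁ − (q − q⁻¹)(s₁₂² − q²)`,
`s₁₂ s₁₁ = q² s₁₁ s₁₂` and `s₁₂ s₂₂ = q⁻² s₂₂ s₁₂`. -/
inductive Sp2Rel (q : ℂ) : FreeAlgebra ℂ Sp2Gen → FreeAlgebra ℂ Sp2Gen → Prop where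
  | inv_right : Sp2Rel q (FreeAlgebra.ι ℂ Sp2Gen.s12 * FreeAlgebra.ι ℂ Sp2Gen.s12inv) 1
  | inv_left : Sp2Rel q (FreeAlgebra.ι ℂ Sp2Gen.s12inv * FreeAlgebra.ι ℂ Sp2Gen.s12) 1
  | main :
      Sp2Rel q (FreeAlgebra.ι ℂ Sp2Gen.s11 * FreeAlgebra.ι ℂ Sp2Gen.s22)
        ((q ^ 2)⁻¹ • (FreeAlgebra.ι ℂ Sp2Gen.s22 * FreeAlgebra.ι ℂ Sp2Gen.s11)
          - (q - q⁻¹) • ((FreeAlgebra.ι ℂ Sp2Gen.s12) ^ 2 - (q ^ 2 : ℂ) • 1))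
  | r12_11 :
      Sp2Rel q (FreeAlgebra.ι ℂ Sp2Gen.s12 * FreeAlgebra.ι ℂ Sp2Gen.s11)
        ((q ^ 2) • (FreeAlgebra.ι ℂ Sp2Gen.s11 * FreeAlgebra.ι ℂ Sp2Gen.s12))
  | r12_22 :
      Sp2Rel q (FreeAlgebra.ι ℂ Sp2Gen.s12 * FreeAlgebra.ι ℂ Sp2Gen.s22)
        ((q ^ 2)⁻¹ • (FreeAlgebra.ι ℂ Sp2Gen.s22 * FreeAlgebra.ι ℂ Sp2Gen.s12))

/-- The twisted quantized enveloping algebra `U'_q(sp₂)`. -/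
abbrev Usp2 (q : ℂ) := RingQuot (Sp2Rel q)

/-- The generator `s₁₁` of `U'_q(sp₂)`. -/
def s11 (q : ℂ) : Usp2 q := RingQuot.mkAlgHom ℂ (Sp2Rel q) (FreeAlgebra.ι ℂ Sp2Gen.s11)

/-- The generator `s₂₂` of `U'_q(sp₂)`. -/
def s22 (q : ℂ) : Usp2 q := RingQuot.mkAlgHom ℂ (Sp2Rel q) (FreeAlgebra.ι ℂ Sp2Gen.s22)

/-- The generator `s₁₂` of `U'_q(sp₂)`. -/
def s12 (q : ℂ) : Usp2 q := RingQuot.mkAlgHom ℂ (Sp2Rel q) (FreeAlgebra.ι ℂ Sp2Gen.s12)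

/-- The generator `s₁₂⁻¹` of `U'_q(sp₂)`. -/
def s12inv (q : ℂ) : Usp2 q := RingQuot.mkAlgHom ℂ (Sp2Rel q) (FreeAlgebra.ι ℂ Sp2Gen.s12inv)


/-- The Verma module `M(λ)` over `U'_q(sp₂)`: the quotient of `U'_q(sp₂)` by the
left ideal generated by `s₁₁` and `s₁₂ − λ`. -/
def VermaIdeal (q lam : ℂ) : Submodule (Usp2 q) (Usp2 q) :=
  Submodule.span (Usp2 q) {s11 q, s12 q - algebraMap ℂ (Usp2 q) lam}

-- auxiliary lemmas
lemma rel_main (q : ℂ) : s11 q * s22 q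
    = (q ^ 2)⁻¹ • (s22 q * s11 q) - (q - q⁻¹) • ((s12 q) ^ 2 - (q ^ 2 : ℂ) • (1 : Usp2 q)) := by
  have h := RingQuot.mkAlgHom_rel ℂ (Sp2Rel.main (q := q))
  simpa [s11, s22, s12, map_mul, map_smul, map_sub, map_pow, map_one] using h

lemma rel_1222 (q : ℂ) : s12 q * s22 q = (q ^ 2)⁻¹ • (s22 q * s12 q) := by
  have h := RingQuot.mkAlgHom_rel ℂ (Sp2Rel.r12_22 (q := q))
  simpa [s12, s22, map_mul, map_smul] using h

lemma mem_s11 (q lam : ℂ) : s11 q ∈ VermaIdeal q lam :=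
  Submodule.subset_span (Set.mem_insert _ _)

lemma mem_s12 (q lam : ℂ) : s12 q - lam • (1 : Usp2 q) ∈ VermaIdeal q lam := by
  have : s12 q - algebraMap ℂ (Usp2 q) lam ∈ VermaIdeal q lam :=
    Submodule.subset_span (Set.mem_insert_of_mem _ rfl)
  simpa [Algebra.algebraMap_eq_smul_one] using this

lemma mem_smulC (q lam : ℂ) (c : ℂ) {x : Usp2 q} (hx : x ∈ VermaIdeal q lam) :
    c • x ∈ VermaIdeal q lam := by
  rw [Algebra.smul_def]
  simpa [smul_eq_mul] using (VermaIdeal q lam).smul_mem (algebraMap ℂ (Usp2 q) c) hx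

lemma mem_mulL (q lam : ℂ) (a : Usp2 q) {x : Usp2 q} (hx : x ∈ VermaIdeal q lam) :
    a * x ∈ VermaIdeal q lam := by
  simpa [smul_eq_mul] using (VermaIdeal q lam).smul_mem a hx

lemma lem12 (q lam : ℂ) : ∀ n : ℕ,
    s12 q * (s22 q) ^ n - ((q ^ (2 * n))⁻¹ * lam) • (s22 q) ^ n ∈ VermaIdeal q lam
  | 0 => by simpa using mem_s12 q lam
  | (n + 1) => by
      have ih := lem12 q lam n
      have key : s12 q * (s22 q) ^ (n + 1)
          - ((q ^ (2 * (n + 1)))⁻¹ * lam) • (s22 q) ^ (n + 1)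
          = (q ^ 2)⁻¹ • (s22 q *
              (s12 q * (s22 q) ^ n - ((q ^ (2 * n))⁻¹ * lam) • (s22 q) ^ n)) := by
        rw [pow_succ' (s22 q), ← mul_assoc, rel_1222]
        have hsc : (q ^ (2 * (n + 1)))⁻¹ = (q ^ 2)⁻¹ * (q ^ (2 * n))⁻¹ := by
          rw [show 2 * (n + 1) = 2 + 2 * n by ring, pow_add, mul_inv]
        rw [hsc]
        rw [mul_sub, mul_smul_comm, smul_sub, smul_mul_assoc, mul_assoc, smul_smul,
          ← pow_succ' (s22 q), mul_assoc]
      rw [key]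
      exact mem_smulC q lam _ (mem_mulL q lam _ ih)

lemma lem11 (q : ℂ) (hq : q ≠ 0) (lam : ℂ) : ∀ k : ℕ,
    s11 q * (s22 q) ^ (k + 1)
      - (q ^ 3 * (1 - lam ^ 2 * (q ^ (2 * (k + 1)))⁻¹) * (1 - (q ^ (2 * (k + 1)))⁻¹))
          • (s22 q) ^ k ∈ VermaIdeal q lam
  | 0 => by
      have hA : q ^ 3 * (1 - lam ^ 2 * (q ^ (2 * (0 + 1)))⁻¹) * (1 - (q ^ (2 * (0 + 1)))⁻¹)
          = -((q - q⁻¹) * (lam * lam - q ^ 2)) := by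
        field_simp
        ring
      have h0 := mem_s12 q lam
      have hb1 : s22 q * s11 q ∈ VermaIdeal q lam := mem_mulL q lam _ (mem_s11 q lam)
      have hb2 : s12 q * s12 q - lam • s12 q ∈ VermaIdeal q lam := by
        have := mem_mulL q lam (s12 q) h0
        rwa [mul_sub, mul_smul_comm, mul_one] at this
      have hb3 : lam • s12 q - (lam * lam) • (1 : Usp2 q) ∈ VermaIdeal q lam := by
        have := mem_smulC q lam lam h0
        rwa [smul_sub, smul_smul] at this
      have hcomb : s11 q * (s22 q) ^ (0 + 1)
          - (q ^ 3 * (1 - lam ^ 2 * (q ^ (2 * (0 + 1)))⁻¹) * (1 - (q ^ (2 * (0 + 1)))⁻¹))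
              • (s22 q) ^ 0
          = (q ^ 2)⁻¹ • (s22 q * s11 q)
            + (-(q - q⁻¹)) • (s12 q * s12 q - lam • s12 q)
            + (-(q - q⁻¹)) • (lam • s12 q - (lam * lam) • (1 : Usp2 q)) := by
        rw [hA, zero_add, pow_one, pow_zero, rel_main, pow_two (s12 q)]
        module
      rw [hcomb]
      exact add_mem (add_mem (mem_smulC q lam _ hb1) (mem_smulC q lam _ hb2))
        (mem_smulC q lam _ hb3)
  | (k + 1) => by
      have ih := lem11 q hq lam k
      set a : ℂ := q ^ 3 * (1 - lam ^ 2 * (q ^ (2 * (k + 1)))⁻¹) * (1 - (q ^ (2 * (k + 1)))⁻¹)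
        with ha_def
      set c : ℂ := (q ^ (2 * (k + 1)))⁻¹ * lam with hc_def
      have h1 : s22 q * (s11 q * (s22 q) ^ (k + 1)) - a • (s22 q) ^ (k + 1)
          ∈ VermaIdeal q lam := by
        have := mem_mulL q lam (s22 q) ih
        rwa [mul_sub, mul_smul_comm, ← pow_succ' (s22 q)] at this
      have h2 : s12 q * (s12 q * (s22 q) ^ (k + 1)) - c • (s12 q * (s22 q) ^ (k + 1))
          ∈ VermaIdeal q lam := by
        have := mem_mulL q lam (s12 q) (lem12 q lam (k + 1))
        rwa [mul_sub, mul_smul_comm] at this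
      have h3 : c • (s12 q * (s22 q) ^ (k + 1)) - (c * c) • (s22 q) ^ (k + 1)
          ∈ VermaIdeal q lam := by
        have := mem_smulC q lam c (lem12 q lam (k + 1))
        rwa [smul_sub, smul_smul] at this
      have hqk : (q : ℂ) ^ (2 * (k + 1)) ≠ 0 := pow_ne_zero _ hq
      have hqk2 : (q : ℂ) ^ (2 * (k + 1 + 1)) ≠ 0 := pow_ne_zero _ hq
      have hs : q ^ 3 * (1 - lam ^ 2 * (q ^ (2 * (k + 1 + 1)))⁻¹) * (1 - (q ^ (2 * (k + 1 + 1)))⁻¹)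
          = (q ^ 2)⁻¹ * a - (q - q⁻¹) * (c * c - q ^ 2) := by
        rw [ha_def, hc_def, show 2 * (k + 1 + 1) = 2 * (k + 1) + 2 by ring]
        field_simp
        ring
      have hrw : s11 q * (s22 q) ^ (k + 1 + 1)
          = (q ^ 2)⁻¹ • (s22 q * (s11 q * (s22 q) ^ (k + 1)))
            - (q - q⁻¹) • (s12 q * (s12 q * (s22 q) ^ (k + 1))
                - (q ^ 2 : ℂ) • (s22 q) ^ (k + 1)) := by
        rw [pow_succ' (s22 q) (k + 1), ← mul_assoc, rel_main]
        simp only [sub_mul, smul_mul_assoc, one_mul, mul_assoc, pow_two]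
      have hcomb : s11 q * (s22 q) ^ (k + 1 + 1)
          - (q ^ 3 * (1 - lam ^ 2 * (q ^ (2 * (k + 1 + 1)))⁻¹) * (1 - (q ^ (2 * (k + 1 + 1)))⁻¹))
              • (s22 q) ^ (k + 1)
          = (q ^ 2)⁻¹ • (s22 q * (s11 q * (s22 q) ^ (k + 1)) - a • (s22 q) ^ (k + 1))
            + (-(q - q⁻¹)) • (s12 q * (s12 q * (s22 q) ^ (k + 1))
                - c • (s12 q * (s22 q) ^ (k + 1)))
            + (-(q - q⁻¹)) • (c • (s12 q * (s22 q) ^ (k + 1)) - (c * c) • (s22 q) ^ (k + 1)) := by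
        rw [hs, hrw]
        module
      rw [hcomb]
      exact add_mem (add_mem (mem_smulC q lam _ h1) (mem_smulC q lam _ h2))
        (mem_smulC q lam _ h3)

/-- In the Verma module `M(λ)` over `U'_q(sp₂)` with highest vector `ξ` (the image
of `1`), one has `s₁₁ s₂₂^k ξ = q³ (1 − λ² q^{−2k})(1 − q^{−2k}) s₂₂^{k−1} ξ` for
all `k ≥ 1`. -/
theorem verma_action (q : ℂ) (hq : q ≠ 0) (hroot : ∀ m : ℕ, 0 < m → q ^ m ≠ 1)
    (lam : ℂ) (hlam : lam ≠ 0) (k : ℕ) (hk : 1 ≤ k) :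
    (Submodule.Quotient.mk (s11 q * (s22 q) ^ k) : Usp2 q ⧸ VermaIdeal q lam)
      = Submodule.Quotient.mk
          ((q ^ 3 * (1 - lam ^ 2 * (q ^ (2 * k))⁻¹) * (1 - (q ^ (2 * k))⁻¹))
            • (s22 q) ^ (k - 1)) := by
  obtain ⟨m, rfl⟩ := Nat.exists_eq_add_of_le hk
  rw [Submodule.Quotient.eq]
  simpa [add_comm 1 m] using lem11 q hq lam m


end
end

section
/- With q nonzero and not a root of unity, the irreducible highest weight module L(λ) over U'_q(sp₂) is finite-dimensional if and only if λ = σ q^m for some positive integer m and σ ∈ {−1, 1}; in that case dim L(λ) = m. -/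
noncomputable section

/-! The vectors `vₙ = s₂₂ⁿ ξ` are eigenvectors of `s₁₂` with the pairwise distinct eigenvalues
`λ q⁻²ⁿ`, and `s₁₁ vₙ₊₁ = cₙ₊₁ vₙ` for explicit scalars `cₙ` which, for `n > 0`, vanish exactly
when `λ² = q²ⁿ`. By simplicity `L` is spanned by the `vₙ`. If `N` is the first index with
`v_N = 0`, then `v₀, …, v_{N-1}` is a basis of `L` and `c_N = 0`. Conversely, if `c_m = 0`, the
span of the `vₙ` with `n ≥ m` is a submodule that misses the eigenvector `ξ`, hence is zero. -/

theorem pow_injective_of_forall_pow_ne_one {M₀ : Type*} [GroupWithZero M₀] {q : M₀} (hq : q ≠ 0)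
    (hroot : ∀ m : ℕ, 0 < m → q ^ m ≠ 1) : Function.Injective (q ^ · : ℕ → M₀) := by
  have hu : Function.Injective (Units.mk0 q hq ^ · : ℕ → M₀ˣ) :=
    injective_pow_iff_not_isOfFinOrder.2 fun h ↦ by
      obtain ⟨m, hm, h1⟩ := isOfFinOrder_iff_pow_eq_one.1 h
      exact hroot m hm (by simpa [Units.ext_iff] using h1)
  exact fun a b h ↦ hu (Units.ext (by simpa using h))

theorem ne_zero_of_pow_injective {M₀ : Type*} [MonoidWithZero M₀] {q : M₀}
    (hinj : Function.Injective (q ^ · : ℕ → M₀)) : q ≠ 0 := fun h ↦ by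
  have := @hinj 1 2 (by simp [h])
  omega

namespace Usp2

variable {q : ℂ}

theorem s12inv_mul_s12 : s12inv q * s12 q = 1 := by
  simpa [s12, s12inv] using RingQuot.mkAlgHom_rel ℂ (Sp2Rel.inv_left (q := q))

theorem s11_mul_s22 : s11 q * s22 q =
    (q ^ 2)⁻¹ • (s22 q * s11 q) - (q - q⁻¹) • (s12 q ^ 2 - (q ^ 2 : ℂ) • 1) := by
  simpa [s11, s22, s12] using RingQuot.mkAlgHom_rel ℂ (Sp2Rel.main (q := q))

theorem s12_mul_s22 : s12 q * s22 q = (q ^ 2)⁻¹ • (s22 q * s12 q) := by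
  simpa [s22, s12] using RingQuot.mkAlgHom_rel ℂ (Sp2Rel.r12_22 (q := q))

def gen (q : ℂ) (g : Sp2Gen) : Usp2 q := RingQuot.mkAlgHom ℂ (Sp2Rel q) (FreeAlgebra.ι ℂ g)

def weight (q lam : ℂ) (n : ℕ) : ℂ := lam / q ^ (2 * n)

/-- Closed form of the solution of `c₀ = 0`, `cₙ₊₁ = q⁻² cₙ - (q - q⁻¹)(weightₙ² - q²)`
(`lowerCoeff_succ`), the recursion that `s11_mul_s22` imposes on `s₁₁ • weightVec`. -/
def lowerCoeff (q lam : ℂ) (n : ℕ) : ℂ :=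
  q ^ 3 * (lam ^ 2 - q ^ (2 * n)) * (1 - q ^ (2 * n)) / q ^ (4 * n)

theorem lowerCoeff_zero (lam : ℂ) : lowerCoeff q lam 0 = 0 := by
  simp [lowerCoeff]

theorem lowerCoeff_succ (hq : q ≠ 0) (lam : ℂ) (n : ℕ) :
    lowerCoeff q lam (n + 1) =
      (q ^ 2)⁻¹ * lowerCoeff q lam n - (q - q⁻¹) * (weight q lam n ^ 2 - q ^ 2) := by
  simp only [lowerCoeff, weight]
  field_simp
  ring

theorem lowerCoeff_eq_zero_iff (hinj : Function.Injective (q ^ · : ℕ → ℂ)) (lam : ℂ) {m : ℕ}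
    (hm : 0 < m) : lowerCoeff q lam m = 0 ↔ lam ^ 2 = q ^ (2 * m) := by
  have hq := ne_zero_of_pow_injective hinj
  have hqm : 1 - q ^ (2 * m) ≠ 0 := fun h ↦ by
    have := hinj (a₁ := 0) (a₂ := 2 * m) (by simpa using (sub_eq_zero.1 h))
    omega
  simp [lowerCoeff, hq, hqm, sub_eq_zero]

theorem weight_injective (hinj : Function.Injective (q ^ · : ℕ → ℂ)) {lam : ℂ} (hlam : lam ≠ 0) :
    Function.Injective (weight q lam) := fun a b h ↦ by
  simp only [weight, div_eq_mul_inv, mul_right_inj' hlam, inv_inj] at h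
  have := hinj h
  omega

section Module

variable {L : Type*} [AddCommGroup L] [Module (Usp2 q) L]

variable (q) in
def weightVec (ξ : L) (n : ℕ) : L := (s22 q ^ n) • ξ

variable {ξ : L} {lam : ℂ}

theorem weightVec_zero : weightVec q ξ 0 = ξ := by
  simp [weightVec]

theorem weightVec_succ (n : ℕ) : weightVec q ξ (n + 1) = s22 q • weightVec q ξ n := by
  simp only [weightVec, pow_succ', mul_smul]

theorem weightVec_eq_zero_of_le {N n : ℕ} (hN : weightVec q ξ N = 0) (h : N ≤ n) :
    weightVec q ξ n = 0 := by
  induction n, h using Nat.le_induction with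
  | base => exact hN
  | succ n _ ih => rw [weightVec_succ, ih, smul_zero]

variable [Module ℂ L] [IsScalarTower ℂ (Usp2 q) L]

theorem smul_mem_of_forall_gen {N : Submodule ℂ L} (hN : ∀ g, ∀ x ∈ N, gen q g • x ∈ N)
    (u : Usp2 q) {x : L} (hx : x ∈ N) : u • x ∈ N := by
  obtain ⟨a, rfl⟩ := RingQuot.mkAlgHom_surjective ℂ (Sp2Rel q) u
  induction a using FreeAlgebra.induction generalizing x with
  | grade0 c => simpa [AlgHom.commutes, algebraMap_smul] using N.smul_mem c hx
  | grade1 g => exact hN g x hx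
  | mul a b ha hb => simpa [mul_smul] using ha (hb hx)
  | add a b ha hb => simpa [add_smul] using N.add_mem (ha hx) (hb hx)

theorem eq_bot_or_eq_top_of_forall_gen [IsSimpleModule (Usp2 q) L] {N : Submodule ℂ L}
    (hN : ∀ g, ∀ x ∈ N, gen q g • x ∈ N) : N = ⊥ ∨ N = ⊤ := by
  let N' : Submodule (Usp2 q) L :=
    { N.toAddSubmonoid with smul_mem' := fun u _ hx ↦ smul_mem_of_forall_gen hN u hx }
  refine (IsSimpleOrder.eq_bot_or_eq_top N').imp (fun h ↦ ?_) (fun h ↦ ?_) <;>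
    ext x <;> simpa [N'] using SetLike.ext_iff.1 h x

theorem forall_gen_smul_mem_span {S : Set L}
    (hS : ∀ g, ∀ x ∈ S, gen q g • x ∈ Submodule.span ℂ S) :
    ∀ g, ∀ x ∈ Submodule.span ℂ S, gen q g • x ∈ Submodule.span ℂ S := fun g x hx ↦
  (Submodule.map_span_le (DistribSMul.toLinearMap ℂ L (gen q g)) S _).2 (hS g) ⟨x, hx, rfl⟩

theorem s12inv_smul_of_s12_smul {x : L} {c : ℂ} (h : s12 q • x = c • x) :
    s12inv q • x = c⁻¹ • x := by
  have hx : x = c • s12inv q • x := by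
    rw [← smul_comm, ← h, ← mul_smul, s12inv_mul_s12, one_smul]
  rcases eq_or_ne c 0 with rfl | hc
  · rw [hx, zero_smul, smul_zero, smul_zero]
  · conv_rhs => rw [hx, smul_smul, inv_mul_cancel₀ hc, one_smul]

theorem s12_smul_weightVec (h12 : s12 q • ξ = lam • ξ) (n : ℕ) :
    s12 q • weightVec q ξ n = weight q lam n • weightVec q ξ n := by
  induction n with
  | zero => simpa [weightVec_zero, weight] using h12
  | succ n ih =>
    rw [weightVec_succ, ← mul_smul, s12_mul_s22, smul_assoc, mul_smul, ih,
      smul_comm (s22 q), smul_smul, weight, weight]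
    congr 1
    ring

theorem s11_smul_weightVec_succ_eq (h12 : s12 q • ξ = lam • ξ) (n : ℕ) :
    s11 q • weightVec q ξ (n + 1) = (q ^ 2)⁻¹ • s22 q • s11 q • weightVec q ξ n
      - ((q - q⁻¹) * (weight q lam n ^ 2 - q ^ 2)) • weightVec q ξ n := by
  have hsq : (s12 q ^ 2 - (q ^ 2 : ℂ) • 1) • weightVec q ξ n =
      (weight q lam n ^ 2 - q ^ 2) • weightVec q ξ n := by
    rw [sub_smul, sq (s12 q), mul_smul, s12_smul_weightVec h12, smul_comm (s12 q),
      s12_smul_weightVec h12, smul_smul, smul_assoc, one_smul, ← sub_smul, ← sq]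
  rw [weightVec_succ, ← mul_smul, s11_mul_s22, sub_smul, smul_assoc, smul_assoc, hsq, smul_smul,
    mul_smul]

theorem s11_smul_weightVec_succ (hq : q ≠ 0) (h11 : s11 q • ξ = 0) (h12 : s12 q • ξ = lam • ξ)
    (n : ℕ) : s11 q • weightVec q ξ (n + 1) = lowerCoeff q lam (n + 1) • weightVec q ξ n := by
  induction n with
  | zero =>
    rw [s11_smul_weightVec_succ_eq h12, weightVec_zero, h11, lowerCoeff_succ hq, lowerCoeff_zero]
    simp
  | succ n ih =>
    rw [s11_smul_weightVec_succ_eq h12, ih, smul_comm (s22 q), ← weightVec_succ, smul_smul,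
      ← sub_smul, lowerCoeff_succ hq lam (n + 1)]

theorem lowerCoeff_eq_zero_of_weightVec (hq : q ≠ 0) (h11 : s11 q • ξ = 0)
    (h12 : s12 q • ξ = lam • ξ) {n : ℕ} (hn : weightVec q ξ n ≠ 0)
    (hn1 : weightVec q ξ (n + 1) = 0) : lowerCoeff q lam (n + 1) = 0 := by
  have := s11_smul_weightVec_succ hq h11 h12 n
  rw [hn1, smul_zero, eq_comm, smul_eq_zero] at this
  exact this.resolve_right hn

theorem hasEigenvector_weightVec (h12 : s12 q • ξ = lam • ξ) {n : ℕ} (hn : weightVec q ξ n ≠ 0) :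
    Module.End.HasEigenvector (DistribSMul.toLinearMap ℂ L (s12 q)) (weight q lam n)
      (weightVec q ξ n) :=
  ⟨Module.End.mem_eigenspace_iff.2 (s12_smul_weightVec h12 n), hn⟩

theorem linearIndependent_weightVec_comp (hinj : Function.Injective (q ^ · : ℕ → ℂ))
    (hlam : lam ≠ 0) (h12 : s12 q • ξ = lam • ξ) {ι : Type*} {f : ι → ℕ}
    (hf : Function.Injective f) (hv : ∀ i, weightVec q ξ (f i) ≠ 0) :
    LinearIndependent ℂ (weightVec q ξ ∘ f) :=
  Module.End.eigenvectors_linearIndependent' _ _ ((weight_injective hinj hlam).comp hf) _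
    fun i ↦ hasEigenvector_weightVec h12 (hv i)

theorem exists_weightVec_eq_zero [FiniteDimensional ℂ L]
    (hinj : Function.Injective (q ^ · : ℕ → ℂ)) (hlam : lam ≠ 0) (h12 : s12 q • ξ = lam • ξ) :
    ∃ n, weightVec q ξ n = 0 := by
  by_contra! hv
  exact Module.Finite.not_linearIndependent_of_infinite _
    (linearIndependent_weightVec_comp hinj hlam h12 Function.injective_id hv)

theorem forall_gen_smul_mem_span_weightVec (h12 : s12 q • ξ = lam • ξ) {I : Set ℕ}
    (h11I : ∀ n ∈ I, s11 q • weightVec q ξ n ∈ Submodule.span ℂ (weightVec q ξ '' I))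
    (h22I : ∀ n ∈ I, weightVec q ξ (n + 1) ∈ Submodule.span ℂ (weightVec q ξ '' I)) :
    ∀ g, ∀ x ∈ Submodule.span ℂ (weightVec q ξ '' I),
      gen q g • x ∈ Submodule.span ℂ (weightVec q ξ '' I) := by
  have hmem {n : ℕ} (hn : n ∈ I) : weightVec q ξ n ∈ Submodule.span ℂ (weightVec q ξ '' I) :=
    Submodule.subset_span ⟨n, hn, rfl⟩
  refine forall_gen_smul_mem_span ?_
  rintro (_ | _ | _ | _) _ ⟨n, hn, rfl⟩
  · exact h11I n hn
  · exact weightVec_succ (q := q) (ξ := ξ) n ▸ h22I n hn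
  · exact (s12_smul_weightVec h12 n).symm ▸ Submodule.smul_mem _ _ (hmem hn)
  · exact (s12inv_smul_of_s12_smul (s12_smul_weightVec h12 n)).symm ▸
      Submodule.smul_mem _ _ (hmem hn)

theorem eq_zero_of_mem_span_weightVec_Ici (hinj : Function.Injective (q ^ · : ℕ → ℂ))
    (hlam : lam ≠ 0) (h12 : s12 q • ξ = lam • ξ) {m : ℕ} (hm : 0 < m)
    (hξ : ξ ∈ Submodule.span ℂ (weightVec q ξ '' Set.Ici m)) : ξ = 0 := by
  let f : Module.End ℂ L := DistribSMul.toLinearMap ℂ L (s12 q)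
  have hle : Submodule.span ℂ (weightVec q ξ '' Set.Ici m) ≤
      ⨆ (μ : ℂ) (_ : μ ≠ weight q lam 0), f.eigenspace μ := by
    refine Submodule.span_le.2 ?_
    rintro _ ⟨n, hn : m ≤ n, rfl⟩
    have hne : weight q lam n ≠ weight q lam 0 := fun h ↦ by
      have := weight_injective hinj hlam h
      omega
    exact Submodule.mem_iSup_of_mem _ (Submodule.mem_iSup_of_mem hne
      (Module.End.mem_eigenspace_iff.2 (s12_smul_weightVec h12 n)))
  have hξ0 : ξ ∈ f.eigenspace (weight q lam 0) := by
    have := (Module.End.mem_eigenspace_iff (f := f)).2 (s12_smul_weightVec h12 0)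
    rwa [weightVec_zero] at this
  simpa using (Module.End.eigenspaces_iSupIndep f (weight q lam 0)).le_bot ⟨hξ0, hle hξ⟩

theorem weightVec_eq_zero_of_lowerCoeff_eq_zero [IsSimpleModule (Usp2 q) L]
    (hinj : Function.Injective (q ^ · : ℕ → ℂ)) (hlam : lam ≠ 0) (hξ : ξ ≠ 0)
    (h11 : s11 q • ξ = 0) (h12 : s12 q • ξ = lam • ξ) {m : ℕ} (hm : 0 < m)
    (hc : lowerCoeff q lam m = 0) : weightVec q ξ m = 0 := by
  set T := Submodule.span ℂ (weightVec q ξ '' Set.Ici m)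
  have hmem {n : ℕ} (hn : m ≤ n) : weightVec q ξ n ∈ T := Submodule.subset_span ⟨n, hn, rfl⟩
  have hT : ∀ g, ∀ x ∈ T, gen q g • x ∈ T := by
    refine forall_gen_smul_mem_span_weightVec h12 (fun n (hn : m ≤ n) ↦ ?_)
      fun n (hn : m ≤ n) ↦ hmem (hn.trans n.le_succ)
    obtain ⟨k, rfl⟩ := Nat.exists_eq_add_one.2 (hm.trans_le hn)
    rw [s11_smul_weightVec_succ (ne_zero_of_pow_injective hinj) h11 h12]
    rcases hn.eq_or_lt with rfl | hlt
    · simp [hc]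
    · exact T.smul_mem _ (hmem (Nat.le_of_lt_succ hlt))
  have hTbot : T = ⊥ := (eq_bot_or_eq_top_of_forall_gen hT).resolve_right fun h ↦
    hξ (eq_zero_of_mem_span_weightVec_Ici hinj hlam h12 hm (show ξ ∈ T from h ▸ Submodule.mem_top))
  simpa [hTbot] using hmem le_rfl

theorem finrank_eq_of_weightVec_eq_zero [IsSimpleModule (Usp2 q) L]
    (hinj : Function.Injective (q ^ · : ℕ → ℂ)) (hlam : lam ≠ 0) (hξ : ξ ≠ 0)
    (h11 : s11 q • ξ = 0) (h12 : s12 q • ξ = lam • ξ) {N : ℕ} (hN : weightVec q ξ N = 0)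
    (hlt : ∀ k < N, weightVec q ξ k ≠ 0) :
    FiniteDimensional ℂ L ∧ Module.finrank ℂ L = N := by
  set P := Submodule.span ℂ (weightVec q ξ '' Set.Iio N)
  have hmem (n : ℕ) : weightVec q ξ n ∈ P := by
    rcases lt_or_ge n N with hn | hn
    · exact Submodule.subset_span ⟨n, hn, rfl⟩
    · simp [weightVec_eq_zero_of_le hN hn]
  have hP : ∀ g, ∀ x ∈ P, gen q g • x ∈ P := by
    refine forall_gen_smul_mem_span_weightVec h12 (fun n _ ↦ ?_) fun n _ ↦ hmem (n + 1)
    cases n with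
    | zero => simp [weightVec_zero, h11]
    | succ k =>
      rw [s11_smul_weightVec_succ (ne_zero_of_pow_injective hinj) h11 h12]
      exact P.smul_mem _ (hmem k)
  have hPtop : P = ⊤ := (eq_bot_or_eq_top_of_forall_gen hP).resolve_left fun h ↦
    hξ (by simpa [h, weightVec_zero] using hmem 0)
  have hspan : ⊤ ≤ Submodule.span ℂ (Set.range (weightVec q ξ ∘ Fin.val : Fin N → L)) :=
    hPtop.ge.trans (Submodule.span_mono fun _ ⟨n, hn, hv⟩ ↦ ⟨⟨n, hn⟩, hv⟩)
  let B : Module.Basis (Fin N) ℂ L := Module.Basis.mk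
    (linearIndependent_weightVec_comp hinj hlam h12 Fin.val_injective fun i ↦ hlt i i.2) hspan
  exact ⟨Module.Finite.of_basis B, by simp [Module.finrank_eq_card_basis B]⟩

theorem exists_sq_eq_and_finrank_eq [IsSimpleModule (Usp2 q) L]
    (hinj : Function.Injective (q ^ · : ℕ → ℂ)) (hlam : lam ≠ 0) (hξ : ξ ≠ 0)
    (h11 : s11 q • ξ = 0) (h12 : s12 q • ξ = lam • ξ) (hex : ∃ n, weightVec q ξ n = 0) :
    ∃ N, 0 < N ∧ lam ^ 2 = q ^ (2 * N) ∧ FiniteDimensional ℂ L ∧ Module.finrank ℂ L = N := by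
  classical
  have hq := ne_zero_of_pow_injective hinj
  have hN : 0 < Nat.find hex := Nat.pos_of_ne_zero fun h ↦ hξ (by
    simpa [h, weightVec_zero] using Nat.find_spec hex)
  obtain ⟨k, hk⟩ := Nat.exists_eq_add_one.2 hN
  have hc := lowerCoeff_eq_zero_of_weightVec hq h11 h12 (Nat.find_min hex (by omega))
    (hk ▸ Nat.find_spec hex)
  exact ⟨_, hN, (lowerCoeff_eq_zero_iff hinj lam hN).1 (hk ▸ hc),
    finrank_eq_of_weightVec_eq_zero hinj hlam hξ h11 h12 (Nat.find_spec hex)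
      fun _ ↦ Nat.find_min hex⟩

end Module

end Usp2

open Usp2 in
/-- The irreducible highest weight module `L(λ)` over `U'_q(sp₂)` (with `q` not a
root of unity) is finite-dimensional if and only if `λ = σ q^m` for a positive
integer `m` and `σ ∈ {−1,1}`; in that case `dim L(λ) = m`. -/
theorem sp2_fd_iff (q : ℂ) (hq : q ≠ 0) (hroot : ∀ m : ℕ, 0 < m → q ^ m ≠ 1)
    (lam : ℂ) (hlam : lam ≠ 0)
    (L : Type) [AddCommGroup L] [Module ℂ L] [Module (Usp2 q) L]
    [IsScalarTower ℂ (Usp2 q) L]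
    (hsimple : IsSimpleModule (Usp2 q) L)
    (ξ : L) (hξ : ξ ≠ 0) (h11 : s11 q • ξ = 0) (h12 : s12 q • ξ = lam • ξ) :
    (FiniteDimensional ℂ L ↔ ∃ m : ℕ, 0 < m ∧ (lam = q ^ m ∨ lam = -q ^ m)) ∧
    ∀ m : ℕ, 0 < m → (lam = q ^ m ∨ lam = -q ^ m) → FiniteDimensional ℂ L →
      Module.finrank ℂ L = m := by
  have hinj := pow_injective_of_forall_pow_ne_one hq hroot
  have hsq (m : ℕ) : (lam = q ^ m ∨ lam = -q ^ m) ↔ lam ^ 2 = q ^ (2 * m) := by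
    rw [pow_mul', sq_eq_sq_iff_eq_or_eq_neg]
  have hzero {m : ℕ} (hm : 0 < m) (hlm : lam = q ^ m ∨ lam = -q ^ m) :
      ∃ n, weightVec q ξ n = 0 :=
    ⟨m, weightVec_eq_zero_of_lowerCoeff_eq_zero hinj hlam hξ h11 h12 hm
      ((lowerCoeff_eq_zero_iff hinj lam hm).2 ((hsq m).1 hlm))⟩
  refine ⟨⟨fun hfd ↦ ?_, fun ⟨m, hm, hlm⟩ ↦ ?_⟩, fun m hm hlm _ ↦ ?_⟩
  · obtain ⟨N, hN, hsqN, -⟩ := exists_sq_eq_and_finrank_eq hinj hlam hξ h11 h12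
      (exists_weightVec_eq_zero hinj hlam h12)
    exact ⟨N, hN, (hsq N).2 hsqN⟩
  · obtain ⟨N, -, -, hfd, -⟩ := exists_sq_eq_and_finrank_eq hinj hlam hξ h11 h12 (hzero hm hlm)
    exact hfd
  · obtain ⟨N, -, hsqN, -, hrank⟩ :=
      exists_sq_eq_and_finrank_eq hinj hlam hξ h11 h12 (hzero hm hlm)
    rw [hrank, ← Nat.mul_left_cancel_iff two_pos]
    exact hinj (hsqN.symm.trans ((hsq m).1 hlm))

end
end

section
/- Fix a positive integer m and σ ∈ {−1,1}, and let q be nonzero and not a root of unity. On an m-dimensional complex vector space with basis v₀,…,v_{m−1}, the operators defined by s₁₂ v_k = σ q^{m−2k} v_k, s₂₂ v_k = v_{k+1} (with v_m = 0), and s₁₁ v_k = q³ (1 − q^{2m−2k})(1 − q^{−2k}) v_{k−1} (with v_{−1} = 0) satisfy the defining relations of U'_q(sp₂): s₁₁ s₂₂ = q^{-2} s₂₂ s₁₁ − (q−q^{-1})(s₁₂² − q²), s₁₂ s₁₁ = q² s₁₁ s₁₂, s₁₂ s₂₂ = q^{-2} s₂₂ s₁₂, and s₁₂ is invertible. Moreover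 this representation is irreducible. -/
/-!
The operator `s₁₂` is diagonal in the basis `v_k`, with eigenvalues `σ q^{m-2k}` that are pairwise
distinct because `q` is not a root of unity, while `s₂₂` and `s₁₁` shift `v_k` up and down. The
relations are therefore checked on each `v_k`, where they become identities between the
eigenvalues and the weights `q³ (1 - q^{2m-2k}) (1 - q^{-2k})`. A nonzero invariant subspace is
stable under polynomials in `s₁₂`, hence under the Lagrange projections onto its eigenlines, so it
contains some `v_k`; since the weights vanish only at `k = 0` and `k = m`, the shifts then reach
every `v_j`.
-/

noncomputable section

/-- The operator `s₁₂` on the `m`-dimensional space with basis `v₀,…,v_{m−1}`: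
`s₁₂ v_k = σ q^{m−2k} v_k`. -/
def M12 (q σ : ℂ) (m : ℕ) : Matrix (Fin m) (Fin m) ℂ :=
  Matrix.diagonal fun k => σ * q ^ ((m : ℤ) - 2 * (k : ℤ))

/-- The operator `s₂₂`: `s₂₂ v_k = v_{k+1}` (with `v_m = 0`). -/
def M22 (m : ℕ) : Matrix (Fin m) (Fin m) ℂ :=
  Matrix.of fun i j => if (i : ℕ) = (j : ℕ) + 1 then 1 else 0

/-- The operator `s₁₁`:
`s₁₁ v_k = q³ (1 − q^{2m−2k})(1 − q^{−2k}) v_{k−1}` (with `v_{−1} = 0`). -/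
def M11 (q : ℂ) (m : ℕ) : Matrix (Fin m) (Fin m) ℂ :=
  Matrix.of fun i j =>
    if (i : ℕ) + 1 = (j : ℕ) then
      q ^ 3 * (1 - q ^ (2 * (m : ℤ) - 2 * (j : ℤ))) * (1 - q ^ (-(2 * (j : ℤ))))
    else 0

theorem zpow_ne_one_of_pow_ne_one {G₀ : Type*} [GroupWithZero G₀] {q : G₀}
    (hroot : ∀ k : ℕ, 0 < k → q ^ k ≠ 1) {n : ℤ} (hn : n ≠ 0) : q ^ n ≠ 1 := by
  rcases Int.natAbs_eq n with h | h <;> rw [h]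
  · exact_mod_cast hroot _ (by omega)
  · rw [zpow_neg, inv_ne_one]
    exact_mod_cast hroot _ (by omega)

def s11Coeff (q : ℂ) (m j : ℕ) : ℂ :=
  q ^ 3 * (1 - q ^ (2 * (m : ℤ) - 2 * (j : ℤ))) * (1 - q ^ (-(2 * (j : ℤ))))

def s12Eigenvalue (q σ : ℂ) (m k : ℕ) : ℂ :=
  σ * q ^ ((m : ℤ) - 2 * (k : ℤ))

theorem s11Coeff_zero (q : ℂ) (m : ℕ) : s11Coeff q m 0 = 0 := by
  simp [s11Coeff]

theorem s11Coeff_self (q : ℂ) (m : ℕ) : s11Coeff q m m = 0 := by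
  simp [s11Coeff]

theorem s11Coeff_ne_zero {q : ℂ} (hq : q ≠ 0) (hroot : ∀ k : ℕ, 0 < k → q ^ k ≠ 1) {m j : ℕ}
    (hj₀ : 0 < j) (hjm : j < m) : s11Coeff q m j ≠ 0 := by
  refine mul_ne_zero (mul_ne_zero (pow_ne_zero _ hq) ?_) ?_ <;>
    refine sub_ne_zero.2 (Ne.symm (zpow_ne_one_of_pow_ne_one hroot ?_)) <;> omega

theorem s12Eigenvalue_eq_mul_succ {q : ℂ} (hq : q ≠ 0) (σ : ℂ) (m k : ℕ) :
    s12Eigenvalue q σ m k = q ^ 2 * s12Eigenvalue q σ m (k + 1) := by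
  simp only [s12Eigenvalue, Nat.cast_add, Nat.cast_one, mul_add, mul_one, sub_add_eq_sub_sub,
    zpow_sub₀ hq, zpow_two]
  field_simp

theorem s11Coeff_eq {q : ℂ} (hq : q ≠ 0) (m k : ℕ) :
    s11Coeff q m k = q ^ 3 * (1 - (q ^ m) ^ 2 / (q ^ k) ^ 2) * (1 - 1 / (q ^ k) ^ 2) := by
  simp only [s11Coeff, zpow_sub₀ hq, zpow_neg, mul_comm (2 : ℤ), zpow_mul, zpow_natCast,
    zpow_ofNat, one_div]

theorem s12Eigenvalue_eq {q : ℂ} (hq : q ≠ 0) (σ : ℂ) (m k : ℕ) :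
    s12Eigenvalue q σ m k = σ * q ^ m / (q ^ k) ^ 2 := by
  simp only [s12Eigenvalue, zpow_sub₀ hq, mul_comm (2 : ℤ), zpow_mul, zpow_natCast, zpow_ofNat]
  ring

theorem s11Coeff_succ {q σ : ℂ} (hq : q ≠ 0) (hσ : σ ^ 2 = 1) (m k : ℕ) :
    s11Coeff q m (k + 1)
      = (q ^ 2)⁻¹ * s11Coeff q m k - (q - q⁻¹) * (s12Eigenvalue q σ m k ^ 2 - q ^ 2) := by
  rw [s12Eigenvalue_eq hq, div_pow, mul_pow, hσ, one_mul, s11Coeff_eq hq, s11Coeff_eq hq, pow_succ]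
  field_simp
  ring

open Matrix

/-- The basis vector `v_j`, extended by `v_j = 0` for `j ≥ m`. -/
def basisVec (m j : ℕ) : Fin m → ℂ := fun i => if (i : ℕ) = j then 1 else 0

theorem basisVec_of_lt {m j : ℕ} (h : j < m) : basisVec m j = Pi.single ⟨j, h⟩ 1 := by
  ext i
  simp [basisVec, Pi.single_apply, Fin.ext_iff]

theorem basisVec_of_le {m j : ℕ} (h : m ≤ j) : basisVec m j = 0 := by
  ext i
  simp [basisVec]
  omega

theorem mulVec_basisVec_of_lt {m j : ℕ} (A : Matrix (Fin m) (Fin m) ℂ) (h : j < m) :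
    A *ᵥ basisVec m j = fun i => A i ⟨j, h⟩ := by
  rw [basisVec_of_lt h, mulVec_single_one]
  rfl

theorem ext_of_mulVec_basisVec {m : ℕ} {A B : Matrix (Fin m) (Fin m) ℂ}
    (h : ∀ j < m, A *ᵥ basisVec m j = B *ᵥ basisVec m j) : A = B :=
  ext_of_mulVec_single fun i => by simpa [basisVec_of_lt i.isLt] using h i i.isLt

theorem diagonal_mulVec_basisVec (m j : ℕ) (d : ℕ → ℂ) :
    diagonal (fun k : Fin m => d k) *ᵥ basisVec m j = d j • basisVec m j := by
  ext i
  by_cases h : (i : ℕ) = j <;> simp [mulVec_diagonal, basisVec, h]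

theorem M12_mulVec_basisVec (q σ : ℂ) (m j : ℕ) :
    M12 q σ m *ᵥ basisVec m j = s12Eigenvalue q σ m j • basisVec m j :=
  diagonal_mulVec_basisVec m j (s12Eigenvalue q σ m)

theorem M22_mulVec_basisVec (m j : ℕ) : M22 m *ᵥ basisVec m j = basisVec m (j + 1) := by
  rcases lt_or_ge j m with h | h
  · rw [mulVec_basisVec_of_lt _ h]
    rfl
  · rw [basisVec_of_le h, basisVec_of_le (by omega), mulVec_zero]

theorem M11_mulVec_basisVec_zero (q : ℂ) (m : ℕ) : M11 q m *ᵥ basisVec m 0 = 0 := by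
  rcases Nat.eq_zero_or_pos m with rfl | h
  · exact Subsingleton.elim _ _
  · rw [mulVec_basisVec_of_lt _ h]
    ext i
    simp [M11]

theorem M11_mulVec_basisVec_succ (q : ℂ) (m j : ℕ) :
    M11 q m *ᵥ basisVec m (j + 1) = s11Coeff q m (j + 1) • basisVec m j := by
  rcases lt_or_ge (j + 1) m with h | h
  · rw [mulVec_basisVec_of_lt _ h]
    ext i
    simp [M11, s11Coeff, basisVec]
  · obtain rfl | h := h.eq_or_lt
    · rw [basisVec_of_le le_rfl, mulVec_zero, s11Coeff_self, zero_smul]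
    · rw [basisVec_of_le h.le, basisVec_of_le (by omega), mulVec_zero, smul_zero]

theorem M22_mulVec_M11_mulVec_basisVec (q : ℂ) (m j : ℕ) :
    M22 m *ᵥ (M11 q m *ᵥ basisVec m j) = s11Coeff q m j • basisVec m j := by
  cases j with
  | zero => rw [M11_mulVec_basisVec_zero, mulVec_zero, s11Coeff_zero, zero_smul]
  | succ j => rw [M11_mulVec_basisVec_succ, mulVec_smul, M22_mulVec_basisVec]

theorem M11_mul_M22_eq_diagonal (q : ℂ) (m : ℕ) :
    M11 q m * M22 m = diagonal (fun k : Fin m => s11Coeff q m (k + 1)) := by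
  refine ext_of_mulVec_basisVec fun j _ => ?_
  rw [← mulVec_mulVec, M22_mulVec_basisVec, M11_mulVec_basisVec_succ,
    diagonal_mulVec_basisVec m j (fun k => s11Coeff q m (k + 1))]

theorem M22_mul_M11_eq_diagonal (q : ℂ) (m : ℕ) :
    M22 m * M11 q m = diagonal (fun k : Fin m => s11Coeff q m k) := by
  refine ext_of_mulVec_basisVec fun j _ => ?_
  rw [← mulVec_mulVec, M22_mulVec_M11_mulVec_basisVec,
    diagonal_mulVec_basisVec m j (s11Coeff q m)]

theorem M12_sq_eq_diagonal (q σ : ℂ) (m : ℕ) :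
    M12 q σ m ^ 2 = diagonal (fun k : Fin m => s12Eigenvalue q σ m k ^ 2) := by
  rw [M12, diagonal_pow]
  rfl

theorem M11_mul_M22_eq_smul_sub {q σ : ℂ} (hq : q ≠ 0) (hσ : σ ^ 2 = 1) (m : ℕ) :
    M11 q m * M22 m
      = (q ^ 2)⁻¹ • (M22 m * M11 q m)
        - (q - q⁻¹) • (M12 q σ m ^ 2 - (q ^ 2 : ℂ) • (1 : Matrix (Fin m) (Fin m) ℂ)) := by
  rw [M11_mul_M22_eq_diagonal, M22_mul_M11_eq_diagonal, M12_sq_eq_diagonal]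
  ext i j
  rcases eq_or_ne i j with rfl | h
  · simp [s11Coeff_succ hq hσ]
  · simp [h]

theorem M12_mul_M11_eq_smul {q : ℂ} (hq : q ≠ 0) (σ : ℂ) (m : ℕ) :
    M12 q σ m * M11 q m = q ^ 2 • (M11 q m * M12 q σ m) := by
  refine ext_of_mulVec_basisVec fun j _ => ?_
  rw [smul_mulVec, ← mulVec_mulVec, ← mulVec_mulVec, M12_mulVec_basisVec, mulVec_smul]
  cases j with
  | zero => simp [M11_mulVec_basisVec_zero]
  | succ j =>
    rw [M11_mulVec_basisVec_succ, mulVec_smul, M12_mulVec_basisVec, smul_smul, smul_smul,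
      smul_smul, s12Eigenvalue_eq_mul_succ hq]
    congr 1
    ring

theorem M12_mul_M22_eq_smul {q : ℂ} (hq : q ≠ 0) (σ : ℂ) (m : ℕ) :
    M12 q σ m * M22 m = (q ^ 2)⁻¹ • (M22 m * M12 q σ m) := by
  refine ext_of_mulVec_basisVec fun j _ => ?_
  rw [smul_mulVec, ← mulVec_mulVec, ← mulVec_mulVec, M12_mulVec_basisVec, mulVec_smul,
    M22_mulVec_basisVec, M12_mulVec_basisVec, smul_smul, s12Eigenvalue_eq_mul_succ hq σ m j,
    inv_mul_cancel_left₀ (pow_ne_zero 2 hq)]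

theorem isUnit_M12 {q σ : ℂ} (hq : q ≠ 0) (hσ : σ ≠ 0) (m : ℕ) : IsUnit (M12 q σ m) := by
  rw [isUnit_iff_isUnit_det, M12, det_diagonal, isUnit_iff_ne_zero, Finset.prod_ne_zero_iff]
  exact fun k _ => mul_ne_zero hσ (zpow_ne_zero _ hq)

theorem Nat.forall_lt_of_iff_succ {P : ℕ → Prop} {m k : ℕ} (hk : k < m) (hPk : P k)
    (h : ∀ j, j + 1 < m → (P j ↔ P (j + 1))) : ∀ j < m, P j := by
  have hP0 : ∀ j < m, (P j ↔ P 0) := by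
    intro j
    induction j with
    | zero => exact fun _ => Iff.rfl
    | succ j ih => exact fun hj => (h j hj).symm.trans (ih (by omega))
  exact fun j hj => (hP0 j hj).2 ((hP0 k hk).1 hPk)

theorem Submodule.single_mem_of_diagonal_mulVec_mem {n K : Type*} [Fintype n] [DecidableEq n]
    [Field K] {d : n → K} (hd : Function.Injective d) {W : Submodule K (n → K)}
    (hW : ∀ v ∈ W, diagonal d *ᵥ v ∈ W) {v : n → K} (hv : v ∈ W) (k : n) :
    Pi.single k (v k) ∈ W := by
  have hvec (i : n) : Module.End.HasEigenvector (toLin' (diagonal d)) (d i) (Pi.single i 1) := by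
    refine Module.End.hasEigenvector_iff.2 ⟨?_, by simp⟩
    simp [← Pi.single_smul']
  have hproj :
      Polynomial.aeval (toLin' (diagonal d)) (Lagrange.basis Finset.univ d k) v
        = Pi.single k (v k) := by
    conv_lhs => rw [pi_eq_sum_univ' v]
    simp only [map_sum, map_smul, Module.End.aeval_apply_of_hasEigenvector (hvec _)]
    rw [Finset.sum_eq_single k]
    · simp [Lagrange.eval_basis_self hd.injOn, ← Pi.single_smul']
    · intro i _ hik
      simp [Lagrange.eval_basis_of_ne (Ne.symm hik)]
    · simp
  rw [← hproj]
  exact Polynomial.aeval_apply_smul_mem_of_le_comap hv _ _ fun w hw => hW w hw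

theorem s12Eigenvalue_injective {q σ : ℂ} (hq : q ≠ 0) (hroot : ∀ k : ℕ, 0 < k → q ^ k ≠ 1)
    (hσ : σ ≠ 0) (m : ℕ) : Function.Injective fun k : Fin m => s12Eigenvalue q σ m k := by
  intro k l hkl
  by_contra hne
  have hkl' : q ^ ((m : ℤ) - 2 * k) = q ^ ((m : ℤ) - 2 * l) := mul_left_cancel₀ hσ hkl
  refine zpow_ne_one_of_pow_ne_one hroot (n := 2 * (l : ℤ) - 2 * k) (by omega) ?_
  rw [show 2 * (l : ℤ) - 2 * k = ((m : ℤ) - 2 * k) - ((m : ℤ) - 2 * l) by ring, zpow_sub₀ hq,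
    hkl', div_self (zpow_ne_zero _ hq)]

theorem eq_bot_or_eq_top_of_mulVec_mem {q σ : ℂ} (hq : q ≠ 0) (hroot : ∀ k : ℕ, 0 < k → q ^ k ≠ 1)
    (hσ : σ ≠ 0) {m : ℕ} (W : Submodule ℂ (Fin m → ℂ))
    (h11 : ∀ v ∈ W, M11 q m *ᵥ v ∈ W) (h22 : ∀ v ∈ W, M22 m *ᵥ v ∈ W)
    (h12 : ∀ v ∈ W, M12 q σ m *ᵥ v ∈ W) : W = ⊥ ∨ W = ⊤ := by
  refine or_iff_not_imp_left.2 fun hW => ?_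
  obtain ⟨v, hv, hv0⟩ := Submodule.exists_mem_ne_zero_of_ne_bot hW
  obtain ⟨k, hk⟩ : ∃ k, v k ≠ 0 := Function.ne_iff.1 hv0
  have hek : basisVec m k ∈ W := by
    have := Submodule.single_mem_of_diagonal_mulVec_mem
      (s12Eigenvalue_injective hq hroot hσ m) h12 hv k
    rwa [← mul_one (v k), ← smul_eq_mul, Pi.single_smul', ← basisVec_of_lt k.isLt,
      Submodule.smul_mem_iff _ hk] at this
  have hstep (j : ℕ) (hj : j + 1 < m) : basisVec m j ∈ W ↔ basisVec m (j + 1) ∈ W := by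
    refine ⟨fun h => M22_mulVec_basisVec m j ▸ h22 _ h, fun h => ?_⟩
    have := h11 _ h
    rwa [M11_mulVec_basisVec_succ,
      Submodule.smul_mem_iff _ (s11Coeff_ne_zero hq hroot j.succ_pos hj)] at this
  have hall := Nat.forall_lt_of_iff_succ k.isLt hek hstep
  refine Submodule.eq_top_iff'.2 fun x => ?_
  rw [pi_eq_sum_univ' x]
  exact Submodule.sum_mem _ fun i _ => W.smul_mem _ (basisVec_of_lt i.isLt ▸ hall i i.isLt)

theorem sp2_explicit_rep_general (q : ℂ) (hq : q ≠ 0) (hroot : ∀ k : ℕ, 0 < k → q ^ k ≠ 1)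
    (σ : ℂ) (hσ : σ = 1 ∨ σ = -1) (m : ℕ) :
    M11 q m * M22 m
        = (q ^ 2)⁻¹ • (M22 m * M11 q m)
          - (q - q⁻¹) • ((M12 q σ m) ^ 2 - (q ^ 2 : ℂ) • (1 : Matrix (Fin m) (Fin m) ℂ)) ∧
    M12 q σ m * M11 q m = (q ^ 2) • (M11 q m * M12 q σ m) ∧
    M12 q σ m * M22 m = (q ^ 2)⁻¹ • (M22 m * M12 q σ m) ∧
    IsUnit (M12 q σ m) ∧
    ∀ W : Submodule ℂ (Fin m → ℂ),
      (∀ v ∈ W, (M11 q m).mulVec v ∈ W) →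
      (∀ v ∈ W, (M22 m).mulVec v ∈ W) →
      (∀ v ∈ W, (M12 q σ m).mulVec v ∈ W) →
      W = ⊥ ∨ W = ⊤ := by
  have hσ2 : σ ^ 2 = 1 := by rcases hσ with rfl | rfl <;> norm_num
  have hσ0 : σ ≠ 0 := by rcases hσ with rfl | rfl <;> norm_num
  exact ⟨M11_mul_M22_eq_smul_sub hq hσ2 m, M12_mul_M11_eq_smul hq σ m,
    M12_mul_M22_eq_smul hq σ m, isUnit_M12 hq hσ0 m, eq_bot_or_eq_top_of_mulVec_mem hq hroot hσ0⟩

/-- The explicit operators `s₁₂ v_k = σ q^{m−2k} v_k`, `s₂₂ v_k = v_{k+1}`,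
`s₁₁ v_k = q³ (1 − q^{2m−2k})(1 − q^{−2k}) v_{k−1}` on an `m`-dimensional space
satisfy the defining relations of `U'_q(sp₂)` (`s₁₂` being invertible), and the
resulting representation is irreducible. -/
theorem sp2_explicit_rep (q : ℂ) (hq : q ≠ 0) (hroot : ∀ k : ℕ, 0 < k → q ^ k ≠ 1)
    (σ : ℂ) (hσ : σ = 1 ∨ σ = -1) (m : ℕ) (hm : 0 < m) :
    M11 q m * M22 m
        = (q ^ 2)⁻¹ • (M22 m * M11 q m)
          - (q - q⁻¹) • ((M12 q σ m) ^ 2 - (q ^ 2 : ℂ) • (1 : Matrix (Fin m) (Fin m) ℂ)) ∧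
    M12 q σ m * M11 q m = (q ^ 2) • (M11 q m * M12 q σ m) ∧
    M12 q σ m * M22 m = (q ^ 2)⁻¹ • (M22 m * M12 q σ m) ∧
    IsUnit (M12 q σ m) ∧
    ∀ W : Submodule ℂ (Fin m → ℂ),
      (∀ v ∈ W, (M11 q m).mulVec v ∈ W) →
      (∀ v ∈ W, (M22 m).mulVec v ∈ W) →
      (∀ v ∈ W, (M12 q σ m).mulVec v ∈ W) →
      W = ⊥ ∨ W = ⊤ :=
  sp2_explicit_rep_general q hq hroot σ hσ m

end
end

section
/- In U_q(gl_N), the q-root vectors e_ij for i < k < j defined by e_ij = e_ik e_kj − q e_kj e_ik are independent of the choice of the intermediate index k; similarly for i > k > j with e_ij = e_ik e_kj − q^{-1} e_kj e_ik. -/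
noncomputable section

/-- Chevalley-type generators `t_i, t_i⁻¹` (for `i : Fin N`) and `e_i, f_i`
(for `i : Fin (N-1)`) of the Drinfeld–Jimbo algebra `U_q(gl_N)`
(all indices 0-based). -/
inductive DJGen (N : ℕ) where
  | t (i : Fin N)
  | tinv (i : Fin N)
  | e (i : Fin (N - 1))
  | f (i : Fin (N - 1))

/-- The inclusion `Fin (N-1) → Fin N`, `i ↦ i`. -/
def emb {N : ℕ} (i : Fin (N - 1)) : Fin N := ⟨i.val, by have := i.isLt; omega⟩

/-- The shifted inclusion `Fin (N-1) → Fin N`, `i ↦ i+1`. -/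
def embS {N : ℕ} (i : Fin (N - 1)) : Fin N := ⟨i.val + 1, by have := i.isLt; omega⟩

namespace DJ

variable (q : ℂ) (N : ℕ)

open FreeAlgebra

/-- The generators inside the free algebra. -/
def Tg (i : Fin N) : FreeAlgebra ℂ (DJGen N) := ι ℂ (DJGen.t i)
def Tinvg (i : Fin N) : FreeAlgebra ℂ (DJGen N) := ι ℂ (DJGen.tinv i)
def Eg (i : Fin (N - 1)) : FreeAlgebra ℂ (DJGen N) := ι ℂ (DJGen.e i)
def Fg (i : Fin (N - 1)) : FreeAlgebra ℂ (DJGen N) := ι ℂ (DJGen.f i)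

/-- The Drinfeld–Jimbo defining relations of `U_q(gl_N)`:
`t_i t_j = t_j t_i`, `t_i t_i⁻¹ = t_i⁻¹ t_i = 1`,
`t_i e_j t_i⁻¹ = q^{δ_ij − δ_{i,j+1}} e_j`, `t_i f_j t_i⁻¹ = q^{−δ_ij + δ_{i,j+1}} f_j`,
`[e_i, f_j] = δ_ij (k_i − k_i⁻¹)/(q − q⁻¹)` with `k_i = t_i t_{i+1}⁻¹`,
`[e_i, e_j] = [f_i, f_j] = 0` for `|i−j| > 1`, and the quantum Serre relations
for `|i−j| = 1`. -/
inductive Rel : FreeAlgebra ℂ (DJGen N) → FreeAlgebra ℂ (DJGen N) → Prop where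
  | t_comm (i j : Fin N) : Rel (Tg N i * Tg N j) (Tg N j * Tg N i)
  | t_inv_right (i : Fin N) : Rel (Tg N i * Tinvg N i) 1
  | t_inv_left (i : Fin N) : Rel (Tinvg N i * Tg N i) 1
  | te (i : Fin N) (j : Fin (N - 1)) :
      Rel (Tg N i * Eg N j * Tinvg N i)
        (((if i.val = j.val then q else 1) * (if i.val = j.val + 1 then q⁻¹ else 1))
          • Eg N j)
  | tf (i : Fin N) (j : Fin (N - 1)) :
      Rel (Tg N i * Fg N j * Tinvg N i)
        (((if i.val = j.val then q⁻¹ else 1) * (if i.val = j.val + 1 then q else 1))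
          • Fg N j)
  | ef (i j : Fin (N - 1)) :
      Rel (Eg N i * Fg N j - Fg N j * Eg N i)
        (if i = j then
          (q - q⁻¹)⁻¹ •
            (Tg N (emb i) * Tinvg N (embS i) - Tinvg N (emb i) * Tg N (embS i))
        else 0)
  | ee_comm (i j : Fin (N - 1)) (h : i.val + 1 < j.val ∨ j.val + 1 < i.val) :
      Rel (Eg N i * Eg N j) (Eg N j * Eg N i)
  | ff_comm (i j : Fin (N - 1)) (h : i.val + 1 < j.val ∨ j.val + 1 < i.val) :
      Rel (Fg N i * Fg N j) (Fg N j * Fg N i)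
  | serre_e (i j : Fin (N - 1)) (h : i.val + 1 = j.val ∨ j.val + 1 = i.val) :
      Rel (Eg N i ^ 2 * Eg N j - (q + q⁻¹) • (Eg N i * Eg N j * Eg N i)
        + Eg N j * Eg N i ^ 2) 0
  | serre_f (i j : Fin (N - 1)) (h : i.val + 1 = j.val ∨ j.val + 1 = i.val) :
      Rel (Fg N i ^ 2 * Fg N j - (q + q⁻¹) • (Fg N i * Fg N j * Fg N i)
        + Fg N j * Fg N i ^ 2) 0

end DJ

/-- The Drinfeld–Jimbo quantized enveloping algebra `U_q(gl_N)`. -/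
abbrev UqglDJ (q : ℂ) (N : ℕ) := RingQuot (DJ.Rel q N)

/-- The generator `e_i` of `U_q(gl_N)` (`0` for out-of-range indices). -/
def genE (q : ℂ) (N : ℕ) (i : ℕ) : UqglDJ q N :=
  if h : i < N - 1 then RingQuot.mkAlgHom ℂ (DJ.Rel q N) (DJ.Eg N ⟨i, h⟩) else 0

/-- The generator `f_i` of `U_q(gl_N)` (`0` for out-of-range indices). -/
def genF (q : ℂ) (N : ℕ) (i : ℕ) : UqglDJ q N :=
  if h : i < N - 1 then RingQuot.mkAlgHom ℂ (DJ.Rel q N) (DJ.Fg N ⟨i, h⟩) else 0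

/-- The `q`-root vector `e_{ij}` for `i < j` (0-based), defined inductively by
`e_{i,i+1} = e_i` and `e_{ij} = e_{i,j-1} e_{j-1,j} − q e_{j-1,j} e_{i,j-1}`
(i.e. taking `k = j−1` in the paper's definition). -/
def eR (q : ℂ) (N : ℕ) (i : ℕ) : ℕ → UqglDJ q N
  | 0 => 0
  | j + 1 =>
    if i = j then genE q N j
    else eR q N i j * genE q N j - q • (genE q N j * eR q N i j)

/-- The `q`-root vector `e_{ij}` for `i > j` (0-based), defined inductively by
`e_{j+1,j} = f_j` and `e_{ij} = e_{i,j+1} e_{j+1,j} − q⁻¹ e_{j+1,j} e_{i,j+1}`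
(i.e. taking `k = j+1` in the paper's definition). -/
def fR (q : ℂ) (N : ℕ) (i j : ℕ) : UqglDJ q N :=
  if j + 1 < i then fR q N i (j + 1) * genF q N j - q⁻¹ • (genF q N j * fR q N i (j + 1))
  else genF q N j
termination_by i - j
decreasing_by omega


section Aux
variable {R : Type*} [Ring R] [Algebra ℂ R]

/-- A commutation combination lemma. -/
lemma comm_combo (c : ℂ) (X Y Z : R)
    (h1 : X * Z = Z * X) (h2 : Y * Z = Z * Y) :
    (X * Y - c • (Y * X)) * Z = Z * (X * Y - c • (Y * X)) := by
  have e1 : X * Y * Z = Z * (X * Y) := by rw [mul_assoc, h2, ← mul_assoc, h1, mul_assoc]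
  have e2 : Y * X * Z = Z * (Y * X) := by rw [mul_assoc, h1, ← mul_assoc, h2, mul_assoc]
  rw [sub_mul, mul_sub, smul_mul_assoc, e1, e2, mul_smul_comm]

/-- The key rebracketing identity. -/
lemma key_assoc (c : ℂ) (A B e : R) (h : A * e = e * A) :
    (A * B - c • (B * A)) * e - c • (e * (A * B - c • (B * A))) =
      A * (B * e - c • (e * B)) - c • ((B * e - c • (e * B)) * A) := by
  have h1 : B * (A * e) = B * (e * A) := by rw [h]
  have h2 : e * (A * B) = A * (e * B) := by rw [← mul_assoc, ← h, mul_assoc]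
  simp only [sub_mul, mul_sub, smul_sub, smul_mul_assoc, mul_smul_comm, smul_smul,
    mul_assoc, h1, h2]
  abel

end Aux

section AuxQ
variable (q : ℂ) (N : ℕ)

lemma genE_comm {l m : ℕ} (h : l + 1 < m) :
    genE q N l * genE q N m = genE q N m * genE q N l := by
  unfold genE
  split_ifs with h1 h2 h2
  · rw [← map_mul, ← map_mul]
    exact RingQuot.mkAlgHom_rel ℂ (DJ.Rel.ee_comm ⟨l, h1⟩ ⟨m, h2⟩ (Or.inl h))
  · simp
  · simp
  · simp

lemma genF_comm {l m : ℕ} (h : m + 1 < l) :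
    genF q N l * genF q N m = genF q N m * genF q N l := by
  unfold genF
  split_ifs with h1 h2 h2
  · rw [← map_mul, ← map_mul]
    exact RingQuot.mkAlgHom_rel ℂ (DJ.Rel.ff_comm ⟨l, h1⟩ ⟨m, h2⟩ (Or.inr h))
  · simp
  · simp
  · simp

lemma eR_commE : ∀ (k i m : ℕ), i < k → k < m →
    eR q N i k * genE q N m = genE q N m * eR q N i k := by
  intro k
  induction k with
  | zero => intro i m h _; omega
  | succ j ih =>
    intro i m h1 h2
    rw [eR]
    split_ifs with hij
    · exact genE_comm q N (by omega)
    · exact comm_combo q _ _ _ (ih i m (by omega) (by omega)) (genE_comm q N (by omega))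

lemma fR_commF : ∀ (d i k m : ℕ), i ≤ k + d → m + 1 < k →
    fR q N i k * genF q N m = genF q N m * fR q N i k := by
  intro d
  induction d with
  | zero =>
    intro i k m hd hm
    rw [fR, if_neg (by omega)]
    exact genF_comm q N hm
  | succ d ih =>
    intro i k m hd hm
    rw [fR]
    split_ifs with hik
    · exact comm_combo q⁻¹ _ _ _ (ih i (k + 1) m (by omega) (by omega))
        (genF_comm q N hm)
    · exact genF_comm q N hm

lemma eR_split : ∀ (j i k : ℕ), i < k → k < j →
    eR q N i j = eR q N i k * eR q N k j - q • (eR q N k j * eR q N i k) := by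
  intro j
  induction j with
  | zero => intro i k _ h; omega
  | succ j ih =>
    intro i k h1 h2
    rcases eq_or_lt_of_le (Nat.lt_succ_iff.mp h2) with hk | hk
    · subst hk
      rw [eR, eR, if_neg (show ¬ i = k by omega), if_pos rfl]
    · simp only [eR]
      rw [if_neg (show ¬ i = j by omega), if_neg (show ¬ k = j by omega),
        ih i k h1 hk]
      exact key_assoc q _ _ _ (eR_commE q N k i j h1 hk)

lemma fR_split : ∀ (d j k i : ℕ), k - j ≤ d → j < k → k < i →
    fR q N i j = fR q N i k * fR q N k j - q⁻¹ • (fR q N k j * fR q N i k) := by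
  intro d
  induction d with
  | zero => intro j k i hd h1 _; omega
  | succ d ih =>
    intro j k i hd h1 h2
    rcases eq_or_lt_of_le (show j + 1 ≤ k from h1) with hk | hk
    · subst hk
      rw [fR, if_pos (by omega),
        show fR q N (j + 1) j = genF q N j from by rw [fR, if_neg (by omega)]]
    · rw [fR, if_pos (show j + 1 < i by omega), ih (j + 1) k i (by omega) hk h2,
        show fR q N k j = fR q N k (j + 1) * genF q N j -
          q⁻¹ • (genF q N j * fR q N k (j + 1)) from by rw [fR, if_pos hk]]
      exact key_assoc q⁻¹ _ _ _ (fR_commF q N i i k j (by omega) hk)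

end AuxQ

/-- The root vectors of `U_q(gl_N)` are independent of the choice of the
intermediate index `k`: for `i < k < j` one has
`e_{ij} = e_{ik} e_{kj} − q e_{kj} e_{ik}`, and for `i > k > j` one has
`e_{ij} = e_{ik} e_{kj} − q⁻¹ e_{kj} e_{ik}`. -/
theorem root_vectors_independent (q : ℂ) (hq : q ≠ 0) (hq2 : q ^ 2 ≠ 1) (N : ℕ) :
    (∀ i k j : ℕ, i < k → k < j → j < N →
      eR q N i j = eR q N i k * eR q N k j - q • (eR q N k j * eR q N i k)) ∧
    ∀ i k j : ℕ, j < k → k < i → i < N →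
      fR q N i j = fR q N i k * fR q N k j - q⁻¹ • (fR q N k j * fR q N i k) := by
  exact ⟨fun i k j h1 h2 _ => eR_split q N j i k h1 h2,
    fun i k j h1 h2 _ => fR_split q N (k - j) j k i le_rfl h1 h2⟩

end
end
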